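/- Let f_1, ..., f_T : ℝ^d → ℝ be convex differentiable G-Lipschitz functions and let x_{t+1} = x_t − η∇f_t(x_t) with x_1 = 0 and η = B/(G√T). Then for every comparator x* with ‖x*‖ ≤ B, ∑_{t=1}^T (f_t(x_t) − f_t(x*)) ≤ (3/2)·G·B·√T. -/

import Mathlib

/-!
Convexity bounds each instantaneous regret `f_t(x_t) - f_t(x*)` by the linearised regret
`⟪∇f_t(x_t), x_t - x*⟫`. Expanding the square in the update gives
`2η ⟪∇f_t(x_t), x_t - x*⟫ ≤ ‖x_t - x*‖² - ‖x_{t+1} - x*‖² + η²G²`, since the Lipschitz constant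
bounds the gradient. Summing telescopes, so the regret is at most `B²/(2η) + TηG²/2`, which the
step size `η = B/(G√T)` balances to `GB√T`.
-/

open InnerProductSpace

section FirstOrderConvexity

variable {E : Type*} [NormedAddCommGroup E] [NormedSpace ℝ E] {f : E → ℝ}

theorem ConvexOn.add_fderiv_sub_le {f' : E →L[ℝ] ℝ} {x : E} (hf : ConvexOn ℝ Set.univ f)
    (hf' : HasFDerivAt f f' x) (y : E) : f x + f' (y - x) ≤ f y := by
  have hline : ConvexOn ℝ Set.univ (f ∘ AffineMap.lineMap (k := ℝ) x y) := by
    simpa using hf.comp_affineMap (AffineMap.lineMap (k := ℝ) x y)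
  have hderiv : HasDerivAt (f ∘ AffineMap.lineMap (k := ℝ) x y) (f' (y - x)) 0 := by
    have hf'0 : HasFDerivAt f f' (AffineMap.lineMap x y (0 : ℝ)) := by simpa using hf'
    exact hf'0.comp_hasDerivAt 0 AffineMap.hasDerivAt_lineMap
  have hslope := hline.le_slope_of_hasDerivAt (Set.mem_univ 0) (Set.mem_univ 1) one_pos hderiv
  simp only [slope_def_field, Function.comp_apply, AffineMap.lineMap_apply_zero,
    AffineMap.lineMap_apply_one, sub_zero, div_one] at hslope
  linarith

end FirstOrderConvexity

section Gradient

variable {F : Type*} [NormedAddCommGroup F] [InnerProductSpace ℝ F] [CompleteSpace F]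
  {f : F → ℝ} {g x : F}

theorem ConvexOn.sub_le_inner_of_hasGradientAt (hf : ConvexOn ℝ Set.univ f)
    (hg : HasGradientAt f g x) (y : F) : f x - f y ≤ ⟪g, x - y⟫_ℝ := by
  have h := hf.add_fderiv_sub_le (hasGradientAt_iff_hasFDerivAt.1 hg) y
  rw [toDual_apply_apply, ← neg_sub, inner_neg_right] at h
  linarith

theorem HasGradientAt.norm_le_of_lipschitzWith {K : NNReal} (hg : HasGradientAt f g x)
    (hf : LipschitzWith K f) : ‖g‖ ≤ K := by
  simpa using (hasGradientAt_iff_hasFDerivAt.1 hg).le_of_lipschitz hf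

end Gradient

section GradientStep

variable {E : Type*} [NormedAddCommGroup E] [InnerProductSpace ℝ E]

theorem norm_sub_smul_sub_sq (x v z : E) (η : ℝ) :
    ‖x - η • v - z‖ ^ 2 = ‖x - z‖ ^ 2 - 2 * η * ⟪v, x - z⟫_ℝ + η ^ 2 * ‖v‖ ^ 2 := by
  rw [sub_right_comm, norm_sub_sq_real, real_inner_smul_right, norm_smul, mul_pow,
    Real.norm_eq_abs, sq_abs, real_inner_comm]
  ring

theorem two_mul_inner_le_of_norm_le {x v z : E} {η G : ℝ} (hv : ‖v‖ ≤ G) :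
    2 * η * ⟪v, x - z⟫_ℝ ≤ ‖x - z‖ ^ 2 - ‖x - η • v - z‖ ^ 2 + η ^ 2 * G ^ 2 := by
  have hvG : ‖v‖ ^ 2 ≤ G ^ 2 := pow_le_pow_left₀ (norm_nonneg v) hv 2
  rw [norm_sub_smul_sub_sq]
  nlinarith [sq_nonneg η]

theorem sum_inner_sub_le_of_gradient_steps {T : ℕ} {η G : ℝ} (hη : 0 < η)
    (v : Fin T → E) (x : ℕ → E) (hx : ∀ t : Fin T, x (t + 1) = x t - η • v t)
    (hv : ∀ t, ‖v t‖ ≤ G) (z : E) :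
    ∑ t : Fin T, ⟪v t, x t - z⟫_ℝ ≤ ‖x 0 - z‖ ^ 2 / (2 * η) + T * (η * G ^ 2 / 2) := by
  set D : ℕ → ℝ := fun n => ‖x n - z‖ ^ 2
  have hstep : ∀ t : Fin T,
      ⟪v t, x t - z⟫_ℝ ≤ (D t - D (t + 1)) / (2 * η) + η * G ^ 2 / 2 := by
    intro t
    have h := two_mul_inner_le_of_norm_le (x := x t) (z := z) (η := η) (hv t)
    rw [← hx t] at h
    rw [div_add' _ _ _ (by positivity), le_div_iff₀ (by positivity)]
    linarith
  have htelescope : ∑ t : Fin T, (D t - D (t + 1)) = D 0 - D T := by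
    rw [Fin.sum_univ_eq_sum_range (fun n => D n - D (n + 1))]
    exact Finset.sum_range_sub' D T
  have hDT : 0 ≤ D T := sq_nonneg _
  calc ∑ t : Fin T, ⟪v t, x t - z⟫_ℝ
      ≤ ∑ t : Fin T, ((D t - D (t + 1)) / (2 * η) + η * G ^ 2 / 2) :=
        Finset.sum_le_sum fun t _ => hstep t
    _ = (D 0 - D T) / (2 * η) + T * (η * G ^ 2 / 2) := by
        rw [Finset.sum_add_distrib, ← Finset.sum_div, htelescope, Finset.sum_const,
          Finset.card_univ, Fintype.card_fin, nsmul_eq_mul]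
    _ ≤ D 0 / (2 * η) + T * (η * G ^ 2 / 2) := by gcongr; linarith

end GradientStep

theorem ogd_regret_bound
    {d : ℕ} (T : ℕ) (hT : 0 < T) (G B : ℝ) (hG : 0 < G) (hB : 0 < B)
    (f : Fin T → EuclideanSpace ℝ (Fin d) → ℝ)
    (g : Fin T → EuclideanSpace ℝ (Fin d) → EuclideanSpace ℝ (Fin d))
    (hconv : ∀ t, ConvexOn ℝ Set.univ (f t))
    (hgrad : ∀ t x, HasGradientAt (f t) (g t x) x)
    (hlip : ∀ t x y, |f t x - f t y| ≤ G * ‖x - y‖)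
    (η : ℝ) (hη : η = B / (G * Real.sqrt T))
    (x : ℕ → EuclideanSpace ℝ (Fin d))
    (hx0 : x 0 = 0)
    (hxrec : ∀ t : Fin T, x (t + 1) = x t - η • g t (x t))
    (xstar : EuclideanSpace ℝ (Fin d)) (hxstar : ‖xstar‖ ≤ B) :
    ∑ t : Fin T, (f t (x t) - f t xstar) ≤ 3 / 2 * G * B * Real.sqrt T := by
  have hsqrtT : 0 < Real.sqrt T := Real.sqrt_pos.2 (by exact_mod_cast hT)
  have hηpos : 0 < η := by rw [hη]; positivity
  have hgrad_le : ∀ t, ‖g t (x t)‖ ≤ G := fun t => by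
    have hL : LipschitzWith G.toNNReal (f t) := LipschitzWith.of_dist_le_mul fun a b => by
      rw [Real.dist_eq, dist_eq_norm, Real.coe_toNNReal _ hG.le]
      exact hlip t a b
    simpa [hG.le] using (hgrad t (x t)).norm_le_of_lipschitzWith hL
  have hx0star : ‖x 0 - xstar‖ ^ 2 ≤ B ^ 2 := by
    rw [hx0, zero_sub, norm_neg]
    exact pow_le_pow_left₀ (norm_nonneg _) hxstar 2
  calc ∑ t : Fin T, (f t (x t) - f t xstar)
      ≤ ∑ t : Fin T, ⟪g t (x t), x t - xstar⟫_ℝ := Finset.sum_le_sum fun t _ =>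
        (hconv t).sub_le_inner_of_hasGradientAt (hgrad t (x t)) xstar
    _ ≤ ‖x 0 - xstar‖ ^ 2 / (2 * η) + T * (η * G ^ 2 / 2) :=
        sum_inner_sub_le_of_gradient_steps hηpos _ x hxrec hgrad_le xstar
    _ ≤ B ^ 2 / (2 * η) + T * (η * G ^ 2 / 2) := by gcongr
    _ = G * B * Real.sqrt T := by
        have hsqrt_sq : Real.sqrt T ^ 2 = T := Real.sq_sqrt (Nat.cast_nonneg T)
        rw [hη]
        field_simp
        rw [hsqrt_sq]
        ring
    _ ≤ 3 / 2 * G * B * Real.sqrt T := by nlinarith [mul_pos (mul_pos hG hB) hsqrtT]
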